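/- For every β > 1, the function g(s) = tanh(β·s) − (1 − δ/10)·s is decreasing on the interval s > (7/6)·√δ, where β = 1 + δ and δ > 0 is sufficiently small. -/

import Mathlib

/-!
Since `g'(s) = β / cosh² (β s) - (1 - δ/10)` and `cosh² x ≥ 1 + x²`, `g` decreases wherever
`β ≤ (1 - δ/10) (1 + (β s)²)`. For `β s ≥ s > 7√δ/6` the right-hand side is at least
`(1 - δ/10) (1 + 49δ/36) = 1 + 227δ/180 - 49δ²/360`, which exceeds `1 + δ` for small `δ`.
-/

open Set

namespace Real

theorem hasDerivAt_tanh (x : ℝ) : HasDerivAt tanh (1 / cosh x ^ 2) x := by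
  have h := (hasDerivAt_sinh x).div (hasDerivAt_cosh x) (cosh_pos x).ne'
  rw [← sq, ← sq, cosh_sq_sub_sinh_sq] at h
  exact h.congr_of_eventuallyEq (.of_forall fun y => tanh_eq_sinh_div_cosh y)

theorem one_add_sq_le_cosh_sq (x : ℝ) : 1 + x ^ 2 ≤ cosh x ^ 2 := by
  have h : |x| ≤ |sinh x| := by
    rw [abs_sinh]
    exact self_le_sinh_iff.2 (abs_nonneg x)
  rw [cosh_sq']
  linarith [sq_le_sq.2 h]

end Real

open Real

theorem hasDerivAt_tanh_mul_sub_mul (β c s : ℝ) :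
    HasDerivAt (fun s => tanh (β * s) - c * s) (β / cosh (β * s) ^ 2 - c) s := by
  have h : HasDerivAt (fun s => tanh (β * s) - c * s) (1 / cosh (β * s) ^ 2 * (β * 1) - c * 1) s :=
    ((hasDerivAt_tanh (β * s)).comp s ((hasDerivAt_id s).const_mul β)).sub
      ((hasDerivAt_id s).const_mul c)
  convert h using 1
  ring

theorem antitoneOn_tanh_mul_sub_mul {β c a : ℝ} (hβ : 1 ≤ β) (ha : 0 ≤ a)
    (hc : β ≤ c * (1 + a ^ 2)) :
    AntitoneOn (fun s => tanh (β * s) - c * s) (Ici a) := by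
  have hderiv := hasDerivAt_tanh_mul_sub_mul β c
  refine antitoneOn_of_hasDerivWithinAt_nonpos (convex_Ici a)
    (continuous_iff_continuousAt.2 fun s => (hderiv s).continuousAt).continuousOn
    (fun s _ => (hderiv s).hasDerivWithinAt) fun s hs => ?_
  rw [interior_Ici, mem_Ioi] at hs
  have hc₀ : 0 ≤ c := nonneg_of_mul_nonneg_left (by linarith) (by positivity : 0 < 1 + a ^ 2)
  have has : a ≤ β * s := by nlinarith
  have hcosh : 1 + a ^ 2 ≤ cosh (β * s) ^ 2 :=
    (one_add_sq_le_cosh_sq (β * s)).trans' (by gcongr)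
  rw [sub_nonpos, div_le_iff₀ (by positivity)]
  exact hc.trans (mul_le_mul_of_nonneg_left hcosh hc₀)

/-- For β = 1 + δ with δ > 0 sufficiently small, the function
    g(s) = tanh(β·s) − (1 − δ/10)·s is decreasing on the interval s > (7/6)·√δ. -/
theorem stmt4 :
    ∃ δ₀ : ℝ, 0 < δ₀ ∧ ∀ δ : ℝ, 0 < δ → δ < δ₀ →
      AntitoneOn (fun s : ℝ => Real.tanh ((1 + δ) * s) - (1 - δ / 10) * s)
        (Set.Ioi ((7 / 6) * Real.sqrt δ)) := by
  refine ⟨1, one_pos, fun δ hδ hδ₁ => ?_⟩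
  have hgain : 1 + δ ≤ (1 - δ / 10) * (1 + (7 / 6 * √δ) ^ 2) := by
    rw [mul_pow, sq_sqrt hδ.le]
    nlinarith
  exact (antitoneOn_tanh_mul_sub_mul (by linarith) (by positivity) hgain).mono Ioi_subset_Ici_self
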